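/- arXiv:1710.00899 — 2 statements merged into one kernel-verified Lean document; each statement's English description precedes it below -/
import Mathlib

section
/- Let H be a self-adjoint operator on a Hilbert space ℋ, bounded from below, and Y ≥ 0 a bounded operator. For t ≥ 0 let E(t) = inf spec(H + tY) and E(∞) = sup_{t≥0} E(t). Suppose E(∞) > E(0), let E₁ ∈ (E(0), E(∞)), and set κ = sup_{s>0, E(s)>E₁} (E(s) − E₁)/s. Then for every bounded operator V ≥ 0 on ℋ and every Borel set B ⊆ (−∞, E₁], the spectral projection P = χ_B(H + V) satisfies P Y P ≥ κ P in the sense of quadratic forms. -/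
/-!
On the range of `P` the quadratic form of `H` is at most `E₁ ‖φ‖²` because `V ≥ 0`, while the
quadratic form of `H + s Y` is at least `E(s) ‖φ‖²`. Subtracting gives
`s ⟪φ, Y φ⟫ ≥ (E(s) - E₁) ‖φ‖²` for every `s > 0`, and taking the supremum over `s` gives `κ`.
-/

open scoped InnerProductSpace

section

variable {𝓗 : Type*} [NormedAddCommGroup 𝓗] [InnerProductSpace ℂ 𝓗] [CompleteSpace 𝓗]

theorem IsSelfAdjoint.sInf_spectrum_mul_norm_sq_le_re_inner {A : 𝓗 →L[ℂ] 𝓗}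
    (hA : IsSelfAdjoint A) (φ : 𝓗) :
    sInf (spectrum ℝ A) * ‖φ‖ ^ 2 ≤ (⟪φ, A φ⟫_ℂ).re := by
  have hle : algebraMap ℝ (𝓗 →L[ℂ] 𝓗) (sInf (spectrum ℝ A)) ≤ A :=
    algebraMap_le_of_le_spectrum (fun x hx ↦ csInf_le (spectrum.isBounded A).bddBelow hx) hA
  have := ((ContinuousLinearMap.le_def _ _).mp hle).re_inner_nonneg_right φ
  simpa [Algebra.algebraMap_eq_smul_one, inner_sub_right, inner_smul_right_eq_smul,
    inner_self_eq_norm_sq_to_K, ← Complex.ofReal_pow] using this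

theorem sInf_spectrum_add_smul_sub_mul_le {H Y : 𝓗 →L[ℂ] 𝓗} (hH : IsSelfAdjoint H)
    (hY : IsSelfAdjoint Y) {E₁ : ℝ} {φ : 𝓗} (hφ : (⟪φ, H φ⟫_ℂ).re ≤ E₁ * ‖φ‖ ^ 2) (s : ℝ) :
    (sInf (spectrum ℝ (H + s • Y)) - E₁) * ‖φ‖ ^ 2 ≤ s * (⟪φ, Y φ⟫_ℂ).re := by
  have hspec := (hH.add ((IsSelfAdjoint.all s).smul hY)).sInf_spectrum_mul_norm_sq_le_re_inner φ
  have hexp : (⟪φ, (H + s • Y) φ⟫_ℂ).re = (⟪φ, H φ⟫_ℂ).re + s * (⟪φ, Y φ⟫_ℂ).re := by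
    simp [inner_smul_right_eq_smul]
  linarith

end

theorem statement1_general
    {𝓗 : Type*} [NormedAddCommGroup 𝓗] [InnerProductSpace ℂ 𝓗] [CompleteSpace 𝓗]
    (H Y V : 𝓗 →L[ℂ] 𝓗) (hH : IsSelfAdjoint H) (hY : IsSelfAdjoint Y)
    (hYpos : ∀ ψ : 𝓗, 0 ≤ (⟪ψ, Y ψ⟫_ℂ).re)
    (hVpos : ∀ ψ : 𝓗, 0 ≤ (⟪ψ, V ψ⟫_ℂ).re)
    (En : ℝ → ℝ) (hEn : ∀ t : ℝ, En t = sInf (spectrum ℝ (H + t • Y)))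
    (E₁ : ℝ)
    (κ : ℝ) (hκ : κ = sSup {x : ℝ | ∃ s : ℝ, 0 < s ∧ E₁ < En s ∧ x = (En s - E₁) / s})
    (P : 𝓗 →L[ℂ] 𝓗)
    (hPB : ∀ ψ : 𝓗, (⟪P ψ, (H + V) (P ψ)⟫_ℂ).re ≤ E₁ * ‖P ψ‖ ^ 2) :
    ∀ ψ : 𝓗, κ * ‖P ψ‖ ^ 2 ≤ (⟪P ψ, Y (P ψ)⟫_ℂ).re := by
  intro ψ
  have hHψ : (⟪P ψ, H (P ψ)⟫_ℂ).re ≤ E₁ * ‖P ψ‖ ^ 2 := by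
    have := hPB ψ
    rw [add_apply, inner_add_right, Complex.add_re] at this
    linarith [hVpos (P ψ)]
  rcases eq_or_ne (P ψ) 0 with h0 | h0
  · simp [h0]
  have hn : 0 < ‖P ψ‖ ^ 2 := by positivity
  rw [← le_div_iff₀ hn, hκ]
  refine Real.sSup_le ?_ (div_nonneg (hYpos _) hn.le)
  rintro _ ⟨s, hs, -, rfl⟩
  rw [hEn, div_le_div_iff₀ hs hn]
  linarith [sInf_spectrum_add_smul_sub_mul_le hH hY hHψ s]

/-- (Abstract uncertainty principle, Lemma 4.1 of Klein.)
`H` self-adjoint bounded below, `Y ≥ 0` bounded, `E t = inf spec (H + tY)`,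
`E ∞ = sup_{t ≥ 0} E t > E 0`, `E₁ ∈ (E 0, E ∞)`,
`κ = sup_{s>0, E s > E₁} (E s − E₁)/s`.  For every bounded `V ≥ 0` and every Borel set
`B ⊆ (−∞, E₁]`, the spectral projection `P = χ_B (H + V)` satisfies `P Y P ≥ κ P`.
The spectral projection is encoded by the properties: `P` is an orthogonal projection
commuting with `H + V`, and on its range the quadratic form of `H + V` is bounded by `E₁`
(which is what `B ⊆ (−∞, E₁]` yields). -/
theorem statement1
    {𝓗 : Type*} [NormedAddCommGroup 𝓗] [InnerProductSpace ℂ 𝓗] [CompleteSpace 𝓗]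
    (H Y V : 𝓗 →L[ℂ] 𝓗) (hH : IsSelfAdjoint H) (hY : IsSelfAdjoint Y)
    (hV : IsSelfAdjoint V)
    (hYpos : ∀ ψ : 𝓗, 0 ≤ (⟪ψ, Y ψ⟫_ℂ).re)
    (hVpos : ∀ ψ : 𝓗, 0 ≤ (⟪ψ, V ψ⟫_ℂ).re)
    (En : ℝ → ℝ) (hEn : ∀ t : ℝ, En t = sInf (spectrum ℝ (H + t • Y)))
    (Einf : ℝ) (hEinf : Einf = sSup {r : ℝ | ∃ t : ℝ, 0 ≤ t ∧ r = En t})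
    (hgap : En 0 < Einf)
    (E₁ : ℝ) (hE₁ : En 0 < E₁) (hE₁' : E₁ < Einf)
    (κ : ℝ) (hκ : κ = sSup {x : ℝ | ∃ s : ℝ, 0 < s ∧ E₁ < En s ∧ x = (En s - E₁) / s})
    (P : 𝓗 →L[ℂ] 𝓗) (hP : IsSelfAdjoint P) (hP2 : P ∘L P = P)
    (hPcomm : P ∘L (H + V) = (H + V) ∘L P)
    (hPB : ∀ ψ : 𝓗, (⟪P ψ, (H + V) (P ψ)⟫_ℂ).re ≤ E₁ * ‖P ψ‖ ^ 2) :
    ∀ ψ : 𝓗, κ * ‖P ψ‖ ^ 2 ≤ (⟪P ψ, Y (P ψ)⟫_ℂ).re :=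
  statement1_general H Y V hH hY hYpos hVpos En hEn E₁ κ hκ P hPB
end

section
/- Let (T_n) be a sequence of bounded self-adjoint operators on a Hilbert space converging strongly to a bounded self-adjoint operator T, i.e., T_n φ → T φ for every φ. Suppose each T_n and T are nonnegative and compact, and the convergence is monotone: T_n ≥ T_{n+1} ≥ T ≥ 0. Then for each k, the k-th largest eigenvalue of T_n converges to the k-th largest eigenvalue of T, and the convergence is from above. -/
open Filter
open scoped InnerProductSpace

/-- The `k`-th largest eigenvalue of a compact nonnegative self-adjoint operator `T`, given
by the max-min principle: the supremum over `k`-dimensional subspaces `V` of the infimum of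
`⟨ψ, Tψ⟩` over unit vectors `ψ ∈ V`. -/
noncomputable def maxMinValue {𝓗 : Type*} [NormedAddCommGroup 𝓗] [InnerProductSpace ℂ 𝓗]
    (T : 𝓗 →L[ℂ] 𝓗) (k : ℕ) : ℝ :=
  sSup {r : ℝ | ∃ V : Submodule ℂ 𝓗, Module.finrank ℂ V = k ∧
    r = sInf {s : ℝ | ∃ ψ ∈ V, ‖ψ‖ = 1 ∧ s = (⟪ψ, T ψ⟫_ℂ).re}}

/-!
The max-min values are monotone for the form order, so `Tlim ≤ T n` gives the bound from
below, and it suffices to show `re ⟪ψ, (T n - Tlim) ψ⟫ → 0` uniformly on the unit sphere.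
This is a Dini argument for `D n = T n - Tlim`, whose forms decrease pointwise to `0`.
Since `0 ≤ D n ≤ D 0`, Cauchy–Schwarz for the positive form of `D n` makes these forms
equicontinuous on the sphere, uniformly in `n`, for the seminorm `ψ ↦ ‖D 0 ψ‖`; as `D 0` is
compact, the sphere has a finite `δ`-net for that seminorm, and convergence on the net
propagates to the whole sphere.
-/

section MaxMin

variable {𝓗 : Type*} [NormedAddCommGroup 𝓗] [InnerProductSpace ℂ 𝓗]

noncomputable def rayleighValuesOn (A : 𝓗 →L[ℂ] 𝓗) (V : Submodule ℂ 𝓗) : Set ℝ :=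
  {s : ℝ | ∃ ψ ∈ V, ‖ψ‖ = 1 ∧ s = (⟪ψ, A ψ⟫_ℂ).re}

lemma maxMinValue_eq_sSup (A : 𝓗 →L[ℂ] 𝓗) (k : ℕ) :
    maxMinValue A k =
      sSup {r : ℝ | ∃ V : Submodule ℂ 𝓗, Module.finrank ℂ V = k ∧
        r = sInf (rayleighValuesOn A V)} :=
  rfl

lemma Submodule.exists_norm_eq_one_of_finrank_pos {V : Submodule ℂ 𝓗}
    (hV : 0 < Module.finrank ℂ V) : ∃ ψ ∈ V, ‖ψ‖ = 1 := by
  have := Module.finite_of_finrank_pos hV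
  obtain ⟨x, hx⟩ := Module.finrank_pos_iff_exists_ne_zero.mp hV
  exact ⟨(‖(x : 𝓗)‖⁻¹ : ℂ) • (x : 𝓗), V.smul_mem _ x.2,
    norm_smul_inv_norm (by simpa using hx)⟩

lemma abs_re_inner_apply_self_le (A : 𝓗 →L[ℂ] 𝓗) {ψ : 𝓗} (hψ : ‖ψ‖ = 1) :
    |(⟪ψ, A ψ⟫_ℂ).re| ≤ ‖A‖ := by
  calc |(⟪ψ, A ψ⟫_ℂ).re| ≤ ‖⟪ψ, A ψ⟫_ℂ‖ := Complex.abs_re_le_norm _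
    _ ≤ ‖ψ‖ * ‖A ψ‖ := norm_inner_le_norm _ _
    _ ≤ ‖A‖ := by simpa [hψ] using A.le_opNorm ψ

lemma bddBelow_rayleighValuesOn (A : 𝓗 →L[ℂ] 𝓗) (V : Submodule ℂ 𝓗) :
    BddBelow (rayleighValuesOn A V) := by
  refine ⟨-‖A‖, ?_⟩
  rintro _ ⟨ψ, -, hψ, rfl⟩
  exact neg_le_of_abs_le (abs_re_inner_apply_self_le A hψ)

lemma rayleighValuesOn_nonempty (A : 𝓗 →L[ℂ] 𝓗) {V : Submodule ℂ 𝓗}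
    (hV : 0 < Module.finrank ℂ V) : (rayleighValuesOn A V).Nonempty := by
  obtain ⟨ψ, hψV, hψ⟩ := V.exists_norm_eq_one_of_finrank_pos hV
  exact ⟨_, ψ, hψV, hψ, rfl⟩

lemma sInf_rayleighValuesOn_le_norm (A : 𝓗 →L[ℂ] 𝓗) {V : Submodule ℂ 𝓗}
    (hV : 0 < Module.finrank ℂ V) : sInf (rayleighValuesOn A V) ≤ ‖A‖ := by
  obtain ⟨ψ, hψV, hψ⟩ := V.exists_norm_eq_one_of_finrank_pos hV
  exact (csInf_le (bddBelow_rayleighValuesOn A V) ⟨ψ, hψV, hψ, rfl⟩).trans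
    (le_of_abs_le (abs_re_inner_apply_self_le A hψ))

lemma sInf_rayleighValuesOn_le_add {A B : 𝓗 →L[ℂ] 𝓗} {V : Submodule ℂ 𝓗}
    (hV : 0 < Module.finrank ℂ V) {c : ℝ}
    (hAB : ∀ ψ : 𝓗, ‖ψ‖ = 1 → (⟪ψ, A ψ⟫_ℂ).re ≤ (⟪ψ, B ψ⟫_ℂ).re + c) :
    sInf (rayleighValuesOn A V) ≤ sInf (rayleighValuesOn B V) + c := by
  rw [← sub_le_iff_le_add]
  refine le_csInf (rayleighValuesOn_nonempty B hV) ?_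
  rintro _ ⟨ψ, hψV, hψ, rfl⟩
  have := csInf_le (bddBelow_rayleighValuesOn A V) ⟨ψ, hψV, hψ, rfl⟩
  linarith [hAB ψ hψ]

lemma maxMinValue_le_add {A B : 𝓗 →L[ℂ] 𝓗} {k : ℕ} (hk : 1 ≤ k) {c : ℝ} (hc : 0 ≤ c)
    (hAB : ∀ ψ : 𝓗, ‖ψ‖ = 1 → (⟪ψ, A ψ⟫_ℂ).re ≤ (⟪ψ, B ψ⟫_ℂ).re + c) :
    maxMinValue A k ≤ maxMinValue B k + c := by
  rw [maxMinValue_eq_sSup, maxMinValue_eq_sSup]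
  by_cases hexists : ∃ V : Submodule ℂ 𝓗, Module.finrank ℂ V = k
  · obtain ⟨V₀, hV₀⟩ := hexists
    have hbdd : BddAbove {r : ℝ | ∃ V : Submodule ℂ 𝓗, Module.finrank ℂ V = k ∧
        r = sInf (rayleighValuesOn B V)} := by
      refine ⟨‖B‖, ?_⟩
      rintro _ ⟨V, hV, rfl⟩
      exact sInf_rayleighValuesOn_le_norm B (hV ▸ hk)
    refine csSup_le ⟨_, V₀, hV₀, rfl⟩ ?_
    rintro _ ⟨V, hV, rfl⟩
    calc sInf (rayleighValuesOn A V) ≤ sInf (rayleighValuesOn B V) + c :=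
          sInf_rayleighValuesOn_le_add (hV ▸ hk) hAB
      _ ≤ _ := by gcongr; exact le_csSup hbdd ⟨V, hV, rfl⟩
  · push Not at hexists
    simp [hexists, hc]

end MaxMin

section Dini

open ContinuousLinearMap

variable {𝓗 : Type*} [NormedAddCommGroup 𝓗] [InnerProductSpace ℂ 𝓗]

lemma re_inner_comm (x y : 𝓗) : (⟪x, y⟫_ℂ).re = (⟪y, x⟫_ℂ).re := by
  simpa using inner_re_symm (𝕜 := ℂ) x y

lemma ContinuousLinearMap.IsPositive.re_inner_apply_comm {S : 𝓗 →L[ℂ] 𝓗} (hS : S.IsPositive)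
    (u v : 𝓗) : (⟪u, S v⟫_ℂ).re = (⟪v, S u⟫_ℂ).re := by
  rw [← hS.inner_left_eq_inner_right, re_inner_comm]

lemma ContinuousLinearMap.re_inner_apply_self_le_of_le {A B : 𝓗 →L[ℂ] 𝓗} (hAB : A ≤ B)
    (ψ : 𝓗) : (⟪ψ, A ψ⟫_ℂ).re ≤ (⟪ψ, B ψ⟫_ℂ).re := by
  have := ((le_def A B).mp hAB).re_inner_nonneg_right ψ
  simpa [inner_sub_right] using this

lemma ContinuousLinearMap.IsPositive.re_inner_apply_sq_le {S : 𝓗 →L[ℂ] 𝓗} (hS : S.IsPositive)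
    (u v : 𝓗) : (⟪u, S v⟫_ℂ).re ^ 2 ≤ (⟪u, S u⟫_ℂ).re * (⟪v, S v⟫_ℂ).re := by
  have hquad : ∀ t : ℝ, 0 ≤ (⟪v, S v⟫_ℂ).re * (t * t) + 2 * (⟪u, S v⟫_ℂ).re * t
      + (⟪u, S u⟫_ℂ).re := by
    intro t
    have := hS.re_inner_nonneg_right (u + (t : ℂ) • v)
    simp only [map_add, map_smul, inner_add_left, inner_add_right, inner_smul_left,
      inner_smul_right, RCLike.re_to_complex, Complex.add_re, Complex.mul_re,
      Complex.conj_ofReal, Complex.ofReal_re, Complex.ofReal_im, zero_mul, sub_zero,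
      hS.re_inner_apply_comm v u] at this
    linarith
  have := discrim_le_zero hquad
  rw [discrim] at this
  nlinarith

lemma ContinuousLinearMap.le_of_re_inner_apply_self_le [CompleteSpace 𝓗] {A B : 𝓗 →L[ℂ] 𝓗}
    (hA : IsSelfAdjoint A) (hB : IsSelfAdjoint B)
    (hAB : ∀ ψ : 𝓗, (⟪ψ, A ψ⟫_ℂ).re ≤ (⟪ψ, B ψ⟫_ℂ).re) : A ≤ B := by
  refine (le_def A B).mpr (isPositive_def'.mpr ⟨hB.sub hA, fun ψ => ?_⟩)
  have h := hAB ψ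
  rw [re_inner_comm ψ (A ψ), re_inner_comm ψ (B ψ)] at h
  simpa [reApplyInnerSelf_apply, inner_sub_left] using h

lemma ContinuousLinearMap.re_inner_apply_le_of_le {S S₀ : 𝓗 →L[ℂ] 𝓗} (hS : 0 ≤ S)
    (hSS₀ : S ≤ S₀) {u w : 𝓗} (hw : ‖w‖ = 1) {η : ℝ} (hη : 0 ≤ η)
    (huη : ‖u‖ * ‖S₀ u‖ * ‖S₀‖ ≤ η ^ 2) : (⟪u, S w⟫_ℂ).re ≤ η := by
  have hSpos := (nonneg_iff_isPositive S).mp hS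
  have hu : (⟪u, S u⟫_ℂ).re ≤ ‖u‖ * ‖S₀ u‖ :=
    (re_inner_apply_self_le_of_le hSS₀ u).trans
      (by simpa using re_inner_le_norm (𝕜 := ℂ) u (S₀ u))
  have hw' : (⟪w, S w⟫_ℂ).re ≤ ‖S₀‖ :=
    (re_inner_apply_self_le_of_le hSS₀ w).trans
      (le_of_abs_le (abs_re_inner_apply_self_le S₀ hw))
  have hsq : (⟪u, S w⟫_ℂ).re ^ 2 ≤ η ^ 2 := calc
    _ ≤ (⟪u, S u⟫_ℂ).re * (⟪w, S w⟫_ℂ).re := hSpos.re_inner_apply_sq_le u w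
    _ ≤ ‖u‖ * ‖S₀ u‖ * ‖S₀‖ :=
      mul_le_mul hu hw' (hSpos.re_inner_nonneg_right w) (by positivity)
    _ ≤ η ^ 2 := huη
  exact le_of_abs_le (abs_le_of_sq_le_sq hsq hη)

lemma ContinuousLinearMap.re_inner_apply_self_le_add_of_le {S S₀ : 𝓗 →L[ℂ] 𝓗} (hS : 0 ≤ S)
    (hSS₀ : S ≤ S₀) {ψ φ : 𝓗} (hψ : ‖ψ‖ = 1) (hφ : ‖φ‖ = 1) {η : ℝ} (hη : 0 ≤ η)
    (hψφ : 2 * ‖S₀ (ψ - φ)‖ * ‖S₀‖ ≤ η ^ 2) :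
    (⟪ψ, S ψ⟫_ℂ).re ≤ (⟪φ, S φ⟫_ℂ).re + 2 * η := by
  have hsymm := ((nonneg_iff_isPositive S).mp hS).re_inner_apply_comm φ ψ
  have hsplit : (⟪ψ, S ψ⟫_ℂ).re - (⟪φ, S φ⟫_ℂ).re
      = (⟪ψ - φ, S ψ⟫_ℂ).re + (⟪ψ - φ, S φ⟫_ℂ).re := by
    simp only [inner_sub_left, Complex.sub_re]
    linarith
  have hsmall : ‖ψ - φ‖ * ‖S₀ (ψ - φ)‖ * ‖S₀‖ ≤ η ^ 2 := by
    refine le_trans ?_ hψφ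
    gcongr
    calc ‖ψ - φ‖ ≤ ‖ψ‖ + ‖φ‖ := norm_sub_le _ _
      _ = 2 := by rw [hψ, hφ]; norm_num
  linarith [re_inner_apply_le_of_le hS hSS₀ hψ hη hsmall,
    re_inner_apply_le_of_le hS hSS₀ hφ hη hsmall]

open Metric in
theorem ContinuousLinearMap.eventually_re_inner_apply_self_le_of_antitone
    {D : ℕ → 𝓗 →L[ℂ] 𝓗} (hD : ∀ n, 0 ≤ D n) (hD_anti : Antitone D)
    (hD₀ : IsCompactOperator (D 0))
    (hlim : ∀ φ : 𝓗, Tendsto (fun n => (⟪φ, D n φ⟫_ℂ).re) atTop (nhds 0))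
    {ε : ℝ} (hε : 0 < ε) :
    ∀ᶠ n in atTop, ∀ ψ : 𝓗, ‖ψ‖ = 1 → (⟪ψ, D n ψ⟫_ℂ).re ≤ ε := by
  set η := ε / 4 with hη
  set δ := η ^ 2 / (2 * (‖D 0‖ + 1))
  have hδ : 0 < δ := by positivity
  obtain ⟨K, hK, hDK⟩ :=
    hD₀.image_subset_compact_of_bounded (isBounded_sphere (x := (0 : 𝓗)) (r := 1))
  obtain ⟨t, hts, htfin, hcover⟩ :=
    finite_approx_of_totallyBounded (hK.totallyBounded.subset hDK) δ hδ
  obtain ⟨s, hs, hsfin, rfl⟩ := Set.exists_subset_image_finite_and.mp ⟨t, hts, htfin, rfl⟩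
  have hnet : ∀ᶠ n in atTop, ∀ φ ∈ s, (⟪φ, D n φ⟫_ℂ).re ≤ ε / 2 :=
    (eventually_all_finite hsfin).mpr fun φ _ =>
      (hlim φ).eventually (ge_mem_nhds (by positivity))
  filter_upwards [hnet] with n hn ψ hψ
  obtain ⟨_, ⟨φ, hφs, rfl⟩, hψφ⟩ := Set.mem_iUnion₂.mp (hcover ⟨ψ, by simpa using hψ, rfl⟩)
  have hφ : ‖φ‖ = 1 := by simpa using hs hφs
  have hsmall : 2 * ‖D 0 (ψ - φ)‖ * ‖D 0‖ ≤ η ^ 2 := by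
    have hclose : ‖D 0 (ψ - φ)‖ < δ := by simpa [dist_eq_norm] using hψφ
    have hδη : 2 * δ * (‖D 0‖ + 1) = η ^ 2 := by simp only [δ]; field_simp
    nlinarith [norm_nonneg (D 0)]
  linarith [re_inner_apply_self_le_add_of_le (hD n) (hD_anti (Nat.zero_le n)) hψ hφ
    (by positivity) hsmall, hn φ hφs, hη]

end Dini

theorem statement17_general
    {𝓗 : Type*} [NormedAddCommGroup 𝓗] [InnerProductSpace ℂ 𝓗] [CompleteSpace 𝓗]
    (T : ℕ → 𝓗 →L[ℂ] 𝓗) (Tlim : 𝓗 →L[ℂ] 𝓗)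
    (hTsa : ∀ n, IsSelfAdjoint (T n)) (hTlimsa : IsSelfAdjoint Tlim)
    (hTcomp : ∀ n, IsCompactOperator (T n)) (hTlimcomp : IsCompactOperator Tlim)
    (hmono : ∀ n : ℕ, ∀ ψ : 𝓗, (⟪ψ, T (n + 1) ψ⟫_ℂ).re ≤ (⟪ψ, T n ψ⟫_ℂ).re)
    (hdom : ∀ n : ℕ, ∀ ψ : 𝓗, (⟪ψ, Tlim ψ⟫_ℂ).re ≤ (⟪ψ, T n ψ⟫_ℂ).re)
    (hstrong : ∀ φ : 𝓗, Tendsto (fun n => T n φ) atTop (nhds (Tlim φ))) :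
    ∀ k : ℕ, 1 ≤ k →
      Tendsto (fun n => maxMinValue (T n) k) atTop (nhds (maxMinValue Tlim k)) ∧
      ∀ n : ℕ, maxMinValue Tlim k ≤ maxMinValue (T n) k := by
  intro k hk
  have hlower : ∀ n, maxMinValue Tlim k ≤ maxMinValue (T n) k := fun n => by
    simpa using maxMinValue_le_add hk le_rfl fun ψ _ => by simpa using hdom n ψ
  refine ⟨tendsto_order.mpr ⟨fun a ha => .of_forall fun n => ha.trans_le (hlower n),
    fun a ha => ?_⟩, hlower⟩
  set D := fun n => T n - Tlim
  have hD : ∀ n, 0 ≤ D n := fun n =>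
    sub_nonneg.mpr (ContinuousLinearMap.le_of_re_inner_apply_self_le hTlimsa (hTsa n) (hdom n))
  have hD_anti : Antitone D := antitone_nat_of_succ_le fun n =>
    sub_le_sub_right
      (ContinuousLinearMap.le_of_re_inner_apply_self_le (hTsa _) (hTsa n) (hmono n)) _
  have hD₀ : IsCompactOperator (D 0) := by simpa [D] using (hTcomp 0).sub hTlimcomp
  have hlim : ∀ φ, Tendsto (fun n => (⟪φ, D n φ⟫_ℂ).re) atTop (nhds 0) := fun φ => by
    have hcont : Continuous fun v : 𝓗 => (⟪φ, v⟫_ℂ).re :=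
      Complex.continuous_re.comp (continuous_const.inner continuous_id)
    simpa [D, inner_sub_right] using
      ((hcont.tendsto _).comp (hstrong φ)).sub_const (⟪φ, Tlim φ⟫_ℂ).re
  have hε : 0 < (a - maxMinValue Tlim k) / 2 := by linarith
  filter_upwards
    [ContinuousLinearMap.eventually_re_inner_apply_self_le_of_antitone hD hD_anti hD₀ hlim hε]
    with n hn
  simp only [D, sub_apply, inner_sub_right, Complex.sub_re] at hn
  have := maxMinValue_le_add (A := T n) (B := Tlim) hk hε.le fun ψ hψ => by linarith [hn ψ hψ]
  linarith

/-- Let `(T n)` be compact nonnegative self-adjoint operators converging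
strongly to a compact nonnegative self-adjoint operator `T`, monotonically:
`T n ≥ T (n+1) ≥ T ≥ 0`.  Then for each `k ≥ 1` the `k`-th largest eigenvalue (max-min
value) of `T n` converges to that of `T`, and the convergence is from above. -/
theorem statement17
    {𝓗 : Type*} [NormedAddCommGroup 𝓗] [InnerProductSpace ℂ 𝓗] [CompleteSpace 𝓗]
    [TopologicalSpace.SeparableSpace 𝓗]
    (T : ℕ → 𝓗 →L[ℂ] 𝓗) (Tlim : 𝓗 →L[ℂ] 𝓗)
    (hTsa : ∀ n, IsSelfAdjoint (T n)) (hTlimsa : IsSelfAdjoint Tlim)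
    (hTcomp : ∀ n, IsCompactOperator (T n)) (hTlimcomp : IsCompactOperator Tlim)
    (hTlimpos : ∀ ψ : 𝓗, 0 ≤ (⟪ψ, Tlim ψ⟫_ℂ).re)
    (hmono : ∀ n : ℕ, ∀ ψ : 𝓗, (⟪ψ, T (n + 1) ψ⟫_ℂ).re ≤ (⟪ψ, T n ψ⟫_ℂ).re)
    (hdom : ∀ n : ℕ, ∀ ψ : 𝓗, (⟪ψ, Tlim ψ⟫_ℂ).re ≤ (⟪ψ, T n ψ⟫_ℂ).re)
    (hstrong : ∀ φ : 𝓗, Tendsto (fun n => T n φ) atTop (nhds (Tlim φ))) :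
    ∀ k : ℕ, 1 ≤ k →
      Tendsto (fun n => maxMinValue (T n) k) atTop (nhds (maxMinValue Tlim k)) ∧
      ∀ n : ℕ, maxMinValue Tlim k ≤ maxMinValue (T n) k :=
  statement17_general T Tlim hTsa hTlimsa hTcomp hTlimcomp hmono hdom hstrong
end
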